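/- Let n ∈ ℕ, R > 0, ε > 0. Let 𝒳 ⊆ ℝⁿ and let E ⊆ 𝒳 × 𝒳 be a symmetric edge relation with x ≠ y for every (x,y) ∈ E. Assume that for all x, y ∈ 𝒳 there exists a finite path from x to y in (𝒳, E) of Euclidean length at most R(‖y − x‖ + ε). Let γ : 𝒳 × 𝒳 → [0,∞) be finitely supported. Then there exists a finitely supported skew-symmetric K : 𝒳 × 𝒳 → ℝ, vanishing off E, such that: (i) for every x ∈ 𝒳, Σ_y K(x,y) = Σ_y γ(x,y) − Σ_y γ(y,x); and (ii) ½ Σ_{(x,y)∈𝒳×𝒳} |K(x,y)| ‖y − x‖ ≤ Σ_{(x,y)∈𝒳×𝒳} γ(x,y) · R(‖y − x‖ + ε). -/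
import Mathlib


open Finset

lemma sum_ind {α : Type*} [DecidableEq α] (T : Finset α) (c : α) (hc : c ∈ T)
    (P : Prop) [Decidable P] (v : ℝ) :
    (∑ y ∈ T, if P ∧ y = c then v else 0) = if P then v else 0 := by
  by_cases h : P <;> simp [h, hc]

lemma sum_pair_ind {α : Type*} [DecidableEq α] (s : Finset (α × α)) (a b : α)
    (hc : (a, b) ∈ s) (g : α × α → ℝ) :
    (∑ q ∈ s, (if q.1 = a ∧ q.2 = b then (1:ℝ) else 0) * g q) = g (a, b) := by
  have h : ∀ q : α × α, (q.1 = a ∧ q.2 = b) ↔ q = (a, b) := fun q => by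
    simp [Prod.ext_iff]
  simp only [h, ite_mul, one_mul, zero_mul]
  simp [Finset.sum_ite_eq' s (a, b) g, hc]


/-- Corrector vector field: in a graph `(𝒳, E)` in `ℝⁿ` in which any two vertices are
joined by a path of Euclidean length at most `R(‖y − x‖ + ε)`, every finitely supported
coupling `γ ≥ 0` on `𝒳 × 𝒳` admits a finitely supported skew-symmetric flow `K`
supported on `E` whose divergence at `x` is `Σ_y γ(x,y) − Σ_y γ(y,x)` and whose total
variation `½ Σ |K(x,y)| ‖y − x‖` is at most `Σ γ(x,y) · R(‖y − x‖ + ε)`. -/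
theorem corrector_vector_field (n : ℕ) (R ε : ℝ) (hR : 0 < R) (hε : 0 < ε)
    (X : Set (EuclideanSpace ℝ (Fin n)))
    (E : Set (EuclideanSpace ℝ (Fin n) × EuclideanSpace ℝ (Fin n)))
    (hEX : E ⊆ X ×ˢ X)
    (hEsymm : ∀ x y, (x, y) ∈ E → (y, x) ∈ E)
    (hEne : ∀ x y, (x, y) ∈ E → x ≠ y)
    (hconn : ∀ x ∈ X, ∀ y ∈ X, ∃ (N : ℕ) (r : ℕ → EuclideanSpace ℝ (Fin n)),
      r 0 = x ∧ r N = y ∧ (∀ k < N, (r k, r (k + 1)) ∈ E) ∧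
      ∑ k ∈ Finset.range N, ‖r (k + 1) - r k‖ ≤ R * (‖y - x‖ + ε))
    (γ : EuclideanSpace ℝ (Fin n) → EuclideanSpace ℝ (Fin n) → ℝ)
    (hγ0 : ∀ x y, 0 ≤ γ x y)
    (hγX : ∀ x y, γ x y ≠ 0 → x ∈ X ∧ y ∈ X)
    (hγfin : {p : EuclideanSpace ℝ (Fin n) × EuclideanSpace ℝ (Fin n) |
      γ p.1 p.2 ≠ 0}.Finite) :
    ∃ K : EuclideanSpace ℝ (Fin n) → EuclideanSpace ℝ (Fin n) → ℝ,
      {p : EuclideanSpace ℝ (Fin n) × EuclideanSpace ℝ (Fin n) | K p.1 p.2 ≠ 0}.Finite ∧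
      (∀ x y, K x y = -K y x) ∧
      (∀ x y, K x y ≠ 0 → (x, y) ∈ E) ∧
      (∀ x, ∑ᶠ y, K x y = (∑ᶠ y, γ x y) - ∑ᶠ y, γ y x) ∧
      (1 / 2 : ℝ) * (∑ᶠ p : EuclideanSpace ℝ (Fin n) × EuclideanSpace ℝ (Fin n),
          |K p.1 p.2| * ‖p.2 - p.1‖) ≤
        ∑ᶠ p : EuclideanSpace ℝ (Fin n) × EuclideanSpace ℝ (Fin n),
          γ p.1 p.2 * (R * (‖p.2 - p.1‖ + ε)) := by
  classical
  choose! N r hr0 hrN hrE hrlen using hconn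
  set S : Finset (EuclideanSpace ℝ (Fin n) × EuclideanSpace ℝ (Fin n)) := hγfin.toFinset with hSdef
  have hSmem : ∀ p : EuclideanSpace ℝ (Fin n) × EuclideanSpace ℝ (Fin n), p ∈ S ↔ γ p.1 p.2 ≠ 0 := fun p => hγfin.mem_toFinset
  have hSX : ∀ p ∈ S, p.1 ∈ X ∧ p.2 ∈ X := fun p hp => hγX _ _ ((hSmem p).1 hp)
  set F : EuclideanSpace ℝ (Fin n) × EuclideanSpace ℝ (Fin n) → EuclideanSpace ℝ (Fin n) → EuclideanSpace ℝ (Fin n) → ℝ := fun p a b =>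
    ∑ k ∈ Finset.range (N p.1 p.2),
      ((if a = r p.1 p.2 k ∧ b = r p.1 p.2 (k+1) then (1:ℝ) else 0)
       - (if a = r p.1 p.2 (k+1) ∧ b = r p.1 p.2 k then 1 else 0)) with hFdef
  set T : Finset (EuclideanSpace ℝ (Fin n)) := S.biUnion (fun p => (Finset.range (N p.1 p.2 + 1)).image (r p.1 p.2))
    with hTdef
  have hrT : ∀ p ∈ S, ∀ k ≤ N p.1 p.2, r p.1 p.2 k ∈ T := by
    intro p hp k hk
    exact Finset.mem_biUnion.2 ⟨p, hp, Finset.mem_image.2 ⟨k, Finset.mem_range.2 (by omega), rfl⟩⟩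
  have hT1 : ∀ p ∈ S, p.1 ∈ T := by
    intro p hp
    have := hrT p hp 0 (Nat.zero_le _)
    rwa [hr0 _ (hSX p hp).1 _ (hSX p hp).2] at this
  have hT2 : ∀ p ∈ S, p.2 ∈ T := by
    intro p hp
    have := hrT p hp (N p.1 p.2) le_rfl
    rwa [hrN _ (hSX p hp).1 _ (hSX p hp).2] at this
  have hFsupp : ∀ p ∈ S, ∀ a b, F p a b ≠ 0 → a ∈ T ∧ b ∈ T ∧ (a, b) ∈ E := by
    intro p hp a b hF
    obtain ⟨k, hk, hterm⟩ := Finset.exists_ne_zero_of_sum_ne_zero hF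
    rw [Finset.mem_range] at hk
    have hE0 : (r p.1 p.2 k, r p.1 p.2 (k+1)) ∈ E :=
      hrE _ (hSX p hp).1 _ (hSX p hp).2 k hk
    have h1 : r p.1 p.2 k ∈ T := hrT p hp k (by omega)
    have h2 : r p.1 p.2 (k+1) ∈ T := hrT p hp (k+1) (by omega)
    by_cases hc1 : a = r p.1 p.2 k ∧ b = r p.1 p.2 (k+1)
    · exact ⟨hc1.1 ▸ h1, hc1.2 ▸ h2, by rw [hc1.1, hc1.2]; exact hE0⟩
    · by_cases hc2 : a = r p.1 p.2 (k+1) ∧ b = r p.1 p.2 k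
      · exact ⟨hc2.1 ▸ h2, hc2.2 ▸ h1, by rw [hc2.1, hc2.2]; exact hEsymm _ _ hE0⟩
      · exfalso; apply hterm; rw [if_neg hc1, if_neg hc2, sub_self]
  refine ⟨fun a b => ∑ p ∈ S, γ p.1 p.2 * F p a b, ?_, ?_, ?_, ?_, ?_⟩
  · -- finite support
    apply Set.Finite.subset ((T ×ˢ T : Finset (EuclideanSpace ℝ (Fin n) × EuclideanSpace ℝ (Fin n))).finite_toSet)
    intro q hq
    obtain ⟨p, hp, hne⟩ := Finset.exists_ne_zero_of_sum_ne_zero hq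
    have hF : F p q.1 q.2 ≠ 0 := fun h => hne (by rw [h, mul_zero])
    obtain ⟨h1, h2, _⟩ := hFsupp p hp q.1 q.2 hF
    simpa using Finset.mem_product.2 ⟨h1, h2⟩
  · -- skew
    intro x y
    rw [← Finset.sum_neg_distrib]
    refine Finset.sum_congr rfl fun p hp => ?_
    rw [← mul_neg]
    congr 1
    rw [hFdef]
    dsimp only
    rw [← Finset.sum_neg_distrib]
    refine Finset.sum_congr rfl fun k hk => ?_
    rw [if_congr (and_comm (a := x = r p.1 p.2 k)) rfl rfl,
        if_congr (and_comm (a := x = r p.1 p.2 (k+1))) rfl rfl]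
    ring
  · -- support in E
    intro x y hK
    obtain ⟨p, hp, hne⟩ := Finset.exists_ne_zero_of_sum_ne_zero hK
    have hF : F p x y ≠ 0 := fun h => hne (by rw [h, mul_zero])
    exact (hFsupp p hp x y hF).2.2
  · -- divergence
    intro x
    dsimp only
    have hKsum : (∑ᶠ y, ∑ p ∈ S, γ p.1 p.2 * F p x y)
        = ∑ y ∈ T, ∑ p ∈ S, γ p.1 p.2 * F p x y := by
      apply finsum_eq_finset_sum_of_support_subset
      intro y hy
      simp only [Function.mem_support] at hy
      obtain ⟨p, hp, hne⟩ := Finset.exists_ne_zero_of_sum_ne_zero hy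
      have hF : F p x y ≠ 0 := fun h => hne (by rw [h, mul_zero])
      exact (hFsupp p hp x y hF).2.1
    have hsumF : ∀ p ∈ S, (∑ y ∈ T, F p x y)
        = (if x = p.1 then (1:ℝ) else 0) - (if x = p.2 then 1 else 0) := by
      intro p hp
      rw [hFdef]
      dsimp only
      rw [Finset.sum_comm]
      have hterm : ∀ k ∈ Finset.range (N p.1 p.2),
          (∑ y ∈ T, ((if x = r p.1 p.2 k ∧ y = r p.1 p.2 (k+1) then (1:ℝ) else 0)
            - (if x = r p.1 p.2 (k+1) ∧ y = r p.1 p.2 k then 1 else 0)))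
          = (if x = r p.1 p.2 k then (1:ℝ) else 0)
            - (if x = r p.1 p.2 (k+1) then 1 else 0) := by
        intro k hk
        rw [Finset.mem_range] at hk
        rw [Finset.sum_sub_distrib,
            sum_ind T _ (hrT p hp (k+1) (by omega)) _ 1,
            sum_ind T _ (hrT p hp k (by omega)) _ 1]
      rw [Finset.sum_congr rfl hterm,
          Finset.sum_range_sub' (fun k => if x = r p.1 p.2 k then (1:ℝ) else 0),
          hr0 _ (hSX p hp).1 _ (hSX p hp).2, hrN _ (hSX p hp).1 _ (hSX p hp).2]
    have hKx : (∑ y ∈ T, ∑ p ∈ S, γ p.1 p.2 * F p x y)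
        = (∑ p ∈ S, if x = p.1 then γ p.1 p.2 else 0)
          - ∑ p ∈ S, if x = p.2 then γ p.1 p.2 else 0 := by
      rw [Finset.sum_comm, ← Finset.sum_sub_distrib]
      refine Finset.sum_congr rfl fun p hp => ?_
      rw [← Finset.mul_sum, hsumF p hp, mul_sub, mul_ite, mul_one, mul_zero,
          mul_ite, mul_one, mul_zero]
    have hγ1 : (∑ᶠ y, γ x y) = ∑ p ∈ S, if x = p.1 then γ p.1 p.2 else 0 := by
      have h1 : (∑ᶠ y, γ x y) = ∑ y ∈ T, γ x y := by
        apply finsum_eq_finset_sum_of_support_subset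
        intro y hy
        exact hT2 _ ((hSmem (x, y)).2 hy)
      rw [h1]
      have h2 : ∀ y ∈ T, γ x y
          = ∑ p ∈ S, if (x = p.1) ∧ y = p.2 then γ p.1 p.2 else 0 := by
        intro y _
        have hiff : ∀ p : EuclideanSpace ℝ (Fin n) × EuclideanSpace ℝ (Fin n),
            ((x = p.1) ∧ y = p.2) ↔ p = (x, y) := by
          intro p
          rw [Prod.ext_iff]
          constructor <;> exact fun h => ⟨h.1.symm, h.2.symm⟩
        simp_rw [hiff]
        rw [Finset.sum_ite_eq' S (x, y) (fun p => γ p.1 p.2)]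
        by_cases h : (x, y) ∈ S
        · rw [if_pos h]
        · rw [if_neg h]
          exact by_contra fun hne => h ((hSmem (x, y)).2 hne)
      rw [Finset.sum_congr rfl h2, Finset.sum_comm]
      exact Finset.sum_congr rfl fun p hp => sum_ind T p.2 (hT2 p hp) (x = p.1) (γ p.1 p.2)
    have hγ2 : (∑ᶠ y, γ y x) = ∑ p ∈ S, if x = p.2 then γ p.1 p.2 else 0 := by
      have h1 : (∑ᶠ y, γ y x) = ∑ y ∈ T, γ y x := by
        apply finsum_eq_finset_sum_of_support_subset
        intro y hy
        exact hT1 _ ((hSmem (y, x)).2 hy)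
      rw [h1]
      have h2 : ∀ y ∈ T, γ y x
          = ∑ p ∈ S, if (x = p.2) ∧ y = p.1 then γ p.1 p.2 else 0 := by
        intro y _
        have hiff : ∀ p : EuclideanSpace ℝ (Fin n) × EuclideanSpace ℝ (Fin n),
            ((x = p.2) ∧ y = p.1) ↔ p = (y, x) := by
          intro p
          rw [Prod.ext_iff]
          constructor <;> exact fun h => ⟨h.2.symm, h.1.symm⟩
        simp_rw [hiff]
        rw [Finset.sum_ite_eq' S (y, x) (fun p => γ p.1 p.2)]
        by_cases h : (y, x) ∈ S
        · rw [if_pos h]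
        · rw [if_neg h]
          exact by_contra fun hne => h ((hSmem (y, x)).2 hne)
      rw [Finset.sum_congr rfl h2, Finset.sum_comm]
      exact Finset.sum_congr rfl fun p hp => sum_ind T p.1 (hT1 p hp) (x = p.2) (γ p.1 p.2)
    rw [hKsum, hKx, hγ1, hγ2]
  · -- total variation
    dsimp only
    have hL : (∑ᶠ q : EuclideanSpace ℝ (Fin n) × EuclideanSpace ℝ (Fin n),
          |∑ p ∈ S, γ p.1 p.2 * F p q.1 q.2| * ‖q.2 - q.1‖)
        = ∑ q ∈ T ×ˢ T, |∑ p ∈ S, γ p.1 p.2 * F p q.1 q.2| * ‖q.2 - q.1‖ := by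
      apply finsum_eq_finset_sum_of_support_subset
      intro q hq
      simp only [Function.mem_support] at hq
      have hKne : (∑ p ∈ S, γ p.1 p.2 * F p q.1 q.2) ≠ 0 := by
        intro h
        exact hq (by rw [h, abs_zero, zero_mul])
      obtain ⟨p, hp, hne⟩ := Finset.exists_ne_zero_of_sum_ne_zero hKne
      have hF : F p q.1 q.2 ≠ 0 := fun h => hne (by rw [h, mul_zero])
      obtain ⟨h1, h2, -⟩ := hFsupp p hp q.1 q.2 hF
      exact Finset.mem_coe.2 (Finset.mem_product.2 ⟨h1, h2⟩)
    have hRhs : (∑ᶠ q : EuclideanSpace ℝ (Fin n) × EuclideanSpace ℝ (Fin n),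
          γ q.1 q.2 * (R * (‖q.2 - q.1‖ + ε)))
        = ∑ q ∈ S, γ q.1 q.2 * (R * (‖q.2 - q.1‖ + ε)) := by
      apply finsum_eq_finset_sum_of_support_subset
      intro q hq
      simp only [Function.mem_support] at hq
      exact (hSmem q).2 fun h => hq (by rw [h, zero_mul])
    rw [hL, hRhs]
    have hFbound : ∀ p ∈ S, (∑ q ∈ T ×ˢ T, |F p q.1 q.2| * ‖q.2 - q.1‖)
        ≤ 2 * (R * (‖p.2 - p.1‖ + ε)) := by
      intro p hp
      have habs : ∀ a b : EuclideanSpace ℝ (Fin n), |F p a b|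
          ≤ ∑ k ∈ Finset.range (N p.1 p.2),
            ((if a = r p.1 p.2 k ∧ b = r p.1 p.2 (k+1) then (1:ℝ) else 0)
             + (if a = r p.1 p.2 (k+1) ∧ b = r p.1 p.2 k then 1 else 0)) := by
        intro a b
        rw [hFdef]
        dsimp only
        refine (Finset.abs_sum_le_sum_abs _ _).trans (Finset.sum_le_sum fun k _ => ?_)
        split_ifs <;> norm_num
      calc (∑ q ∈ T ×ˢ T, |F p q.1 q.2| * ‖q.2 - q.1‖)
          ≤ ∑ q ∈ T ×ˢ T, (∑ k ∈ Finset.range (N p.1 p.2),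
              ((if q.1 = r p.1 p.2 k ∧ q.2 = r p.1 p.2 (k+1) then (1:ℝ) else 0)
               + (if q.1 = r p.1 p.2 (k+1) ∧ q.2 = r p.1 p.2 k then 1 else 0))) * ‖q.2 - q.1‖ :=
            Finset.sum_le_sum fun q _ =>
              mul_le_mul_of_nonneg_right (habs q.1 q.2) (norm_nonneg _)
        _ = ∑ k ∈ Finset.range (N p.1 p.2), ∑ q ∈ T ×ˢ T,
              ((if q.1 = r p.1 p.2 k ∧ q.2 = r p.1 p.2 (k+1) then (1:ℝ) else 0) * ‖q.2 - q.1‖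
               + (if q.1 = r p.1 p.2 (k+1) ∧ q.2 = r p.1 p.2 k then (1:ℝ) else 0) * ‖q.2 - q.1‖) := by
            simp_rw [Finset.sum_mul, add_mul]
            rw [Finset.sum_comm]
        _ = ∑ k ∈ Finset.range (N p.1 p.2), 2 * ‖r p.1 p.2 (k+1) - r p.1 p.2 k‖ := by
            refine Finset.sum_congr rfl fun k hk => ?_
            rw [Finset.mem_range] at hk
            have hm1 : ((r p.1 p.2 k, r p.1 p.2 (k+1)) :
                EuclideanSpace ℝ (Fin n) × EuclideanSpace ℝ (Fin n)) ∈ T ×ˢ T :=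
              Finset.mem_product.2 ⟨hrT p hp k (by omega), hrT p hp (k+1) (by omega)⟩
            have hm2 : ((r p.1 p.2 (k+1), r p.1 p.2 k) :
                EuclideanSpace ℝ (Fin n) × EuclideanSpace ℝ (Fin n)) ∈ T ×ˢ T :=
              Finset.mem_product.2 ⟨hrT p hp (k+1) (by omega), hrT p hp k (by omega)⟩
            rw [Finset.sum_add_distrib,
                sum_pair_ind (T ×ˢ T) _ _ hm1 (fun q => ‖q.2 - q.1‖),
                sum_pair_ind (T ×ˢ T) _ _ hm2 (fun q => ‖q.2 - q.1‖)]
            dsimp only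
            rw [norm_sub_rev (r p.1 p.2 k)]
            ring
        _ = 2 * ∑ k ∈ Finset.range (N p.1 p.2), ‖r p.1 p.2 (k+1) - r p.1 p.2 k‖ := by
            rw [Finset.mul_sum]
        _ ≤ 2 * (R * (‖p.2 - p.1‖ + ε)) := by
            have := hrlen _ (hSX p hp).1 _ (hSX p hp).2
            linarith
    have key : (∑ q ∈ T ×ˢ T, |∑ p ∈ S, γ p.1 p.2 * F p q.1 q.2| * ‖q.2 - q.1‖)
        ≤ ∑ p ∈ S, γ p.1 p.2 * (2 * (R * (‖p.2 - p.1‖ + ε))) := by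
      calc (∑ q ∈ T ×ˢ T, |∑ p ∈ S, γ p.1 p.2 * F p q.1 q.2| * ‖q.2 - q.1‖)
          ≤ ∑ q ∈ T ×ˢ T, (∑ p ∈ S, γ p.1 p.2 * |F p q.1 q.2|) * ‖q.2 - q.1‖ := by
            refine Finset.sum_le_sum fun q _ => ?_
            refine mul_le_mul_of_nonneg_right ?_ (norm_nonneg _)
            refine (Finset.abs_sum_le_sum_abs _ _).trans (Finset.sum_le_sum fun p _ => ?_)
            rw [abs_mul, abs_of_nonneg (hγ0 _ _)]
        _ = ∑ p ∈ S, γ p.1 p.2 * ∑ q ∈ T ×ˢ T, |F p q.1 q.2| * ‖q.2 - q.1‖ := by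
            simp_rw [Finset.sum_mul, Finset.mul_sum]
            rw [Finset.sum_comm]
            exact Finset.sum_congr rfl fun p _ =>
              Finset.sum_congr rfl fun q _ => by ring
        _ ≤ ∑ p ∈ S, γ p.1 p.2 * (2 * (R * (‖p.2 - p.1‖ + ε))) :=
            Finset.sum_le_sum fun p hp =>
              mul_le_mul_of_nonneg_left (hFbound p hp) (hγ0 _ _)
    have hfin : (∑ p ∈ S, γ p.1 p.2 * (2 * (R * (‖p.2 - p.1‖ + ε))))
        = 2 * ∑ q ∈ S, γ q.1 q.2 * (R * (‖q.2 - q.1‖ + ε)) := by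
      rw [Finset.mul_sum]
      exact Finset.sum_congr rfl fun p _ => by ring
    rw [hfin] at key
    linarith
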